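/- arXiv:1202.3006 — 2 statements merged into one kernel-verified Lean document; each statement's English description precedes it below -/
import Mathlib

section
/- Let P be an r-differential poset, k a positive integer, and n ≥ 0. Define v_{n,k} := Σ_{j=0}^{n} (−1)^j U^j t_{n−j} / (j+1)!_{r,k} in ℚP_n, where t_0 ⋖ t_1 ⋖ t_2 ⋖ ⋯ is a saturated chain with rank(t_m) = m such that each t_m covers at most one element of P. Then (DU_n + kI) v_{n,k} = t_n. -/
/-!
The axioms (D1) and (D2) say exactly that `DU_{n+1} = U_n D_{n+1} + r I`, hence
`DU · U^j = U^j · DU + j r U^j`. Along the chain, `D t_{m+1} = t_m` because `t_m` is the only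
element covered by `t_{m+1}`, and `DU t_0 = r t_0`; together these give
`(DU + kI) U^j t_m = U^{j+1} t_{m-1} + ((j+1) r + k) U^j t_m`.
The coefficients `(-1)^j / (j+1)!_{r,k}` are chosen so that, after multiplying by
`(j+1) r + k`, the terms of `(DU + kI) v_{n,k}` telescope down to `t_n`.
-/

open Matrix

variable {α : Type*}

/-- The generalized factorial `ℓ!_{r,k} = (rℓ+k)(r(ℓ-1)+k)⋯(r·1+k)`. -/
def genFac (r k ℓ : ℕ) : ℕ := ∏ i ∈ Finset.range ℓ, (r * (i + 1) + k)

open Classical in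
/-- The matrix of the up map `U_n : ℚP_n → ℚP_{n+1}`. -/
noncomputable def upMat [PartialOrder α] (rk : α → ℕ) (n : ℕ) :
    Matrix {x : α // rk x = n + 1} {x : α // rk x = n} ℚ :=
  Matrix.of fun z x => if x.1 ⋖ z.1 then 1 else 0

/-- The matrix of `DU_n := D_{n+1} U_n`. -/
noncomputable def duMat [PartialOrder α] (rk : α → ℕ)
    [∀ n : ℕ, Fintype {x : α // rk x = n}] (n : ℕ) :
    Matrix {x : α // rk x = n} {x : α // rk x = n} ℚ :=
  (upMat rk n)ᵀ * upMat rk n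

/-- `upIter rk m j v` is `U^j v` for `v ∈ ℚP_m`. -/
noncomputable def upIter [PartialOrder α] (rk : α → ℕ)
    [∀ n : ℕ, Fintype {x : α // rk x = n}] (m : ℕ) :
    (j : ℕ) → ({x : α // rk x = m} → ℚ) → ({x : α // rk x = m + j} → ℚ)
  | 0, v => v
  | j + 1, v => (upMat rk (m + j)).mulVec (upIter rk m j v)

/-- Transport a vector along an equality of ranks. -/
noncomputable def rankCast [PartialOrder α] (rk : α → ℕ) (m n : ℕ)
    (v : {x : α // rk x = m} → ℚ) : {x : α // rk x = n} → ℚ :=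
  fun x => if h : rk x.1 = m then v ⟨x.1, h⟩ else 0

open Classical in
/-- The standard basis vector of `y` in `ℚP_n`. -/
noncomputable def basisVec [PartialOrder α] (rk : α → ℕ) (n : ℕ) (y : α) :
    {x : α // rk x = n} → ℚ :=
  fun x => if x.1 = y then 1 else 0

/-- The vector `v_{n,k} := Σ_{j=0}^n (-1)^j U^j t_{n-j} / (j+1)!_{r,k}`. -/
noncomputable def vVec [PartialOrder α] (rk : α → ℕ)
    [∀ n : ℕ, Fintype {x : α // rk x = n}] (t : ℕ → α) (r k n : ℕ) :
    {x : α // rk x = n} → ℚ :=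
  ∑ j ∈ Finset.range (n + 1),
    ((-1 : ℚ) ^ j / (genFac r k (j + 1) : ℚ)) •
      rankCast rk ((n - j) + j) n (upIter rk (n - j) j (basisVec rk (n - j) (t (n - j))))

open Classical

lemma sum_ite_eq_ncard (rk : α → ℕ) [∀ n : ℕ, Fintype {x : α // rk x = n}] {N : ℕ}
    (P : α → Prop) [DecidablePred P]
    (hP : ∀ z, P z → rk z = N) :
    ∑ z : {x : α // rk x = N}, (if P z.1 then (1 : ℚ) else 0) = ({z | P z}.ncard : ℚ) := by
  have himg : {z | P z} = Subtype.val '' {z : {x : α // rk x = N} | P z.1} := by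
    ext z
    exact ⟨fun hz => ⟨⟨z, hP z hz⟩, hz, rfl⟩, by rintro ⟨w, hw, rfl⟩; exact hw⟩
  rw [himg, Set.ncard_image_of_injective _ Subtype.val_injective, Set.ncard_eq_toFinset_card',
    Finset.sum_boole, Set.toFinset_ofPred]

section RankLevels

variable [PartialOrder α] (rk : α → ℕ)

lemma rankCast_self (m : ℕ) (v : {x : α // rk x = m} → ℚ) : rankCast rk m m v = v :=
  funext fun x => dif_pos x.2

lemma rankCast_of_ne {m n : ℕ} (h : m ≠ n) (v : {x : α // rk x = m} → ℚ) :
    rankCast rk m n v = 0 :=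
  funext fun x => dif_neg fun hx : rk x.1 = m => h (hx ▸ x.2)

lemma basisVec_eq_single {n : ℕ} {y : α} (hy : rk y = n) :
    basisVec rk n y = Pi.single ⟨y, hy⟩ 1 := by
  funext x
  simp [basisVec, Pi.single_apply, Subtype.ext_iff]

lemma eq_bot_of_rk_eq_zero [OrderBot α] (hgrade : ∀ x y : α, x ⋖ y → rk y = rk x + 1)
    (hdown : ∀ x : α, x ≠ ⊥ → ∃ y : α, y ⋖ x) {x : α} (hx : rk x = 0) : x = ⊥ := by
  by_contra h
  obtain ⟨y, hy⟩ := hdown x h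
  have := hgrade y x hy
  omega

end RankLevels

section UpDown

variable [PartialOrder α] (rk : α → ℕ) [∀ n : ℕ, Fintype {x : α // rk x = n}]
  (hgrade : ∀ x y : α, x ⋖ y → rk y = rk x + 1)
include hgrade

lemma duMat_apply {N : ℕ} (x y : {x : α // rk x = N}) :
    duMat rk N x y = ({z : α | x.1 ⋖ z ∧ y.1 ⋖ z}.ncard : ℚ) := by
  simp only [duMat, mul_apply, transpose_apply, upMat, of_apply, boole_mul, ← ite_and]
  exact sum_ite_eq_ncard rk (fun z => x.1 ⋖ z ∧ y.1 ⋖ z) fun z hz => by rw [hgrade x.1 z hz.1, x.2]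

lemma upMat_mul_transpose_apply {N : ℕ} (x y : {x : α // rk x = N + 1}) :
    (upMat rk N * (upMat rk N)ᵀ) x y = ({w : α | w ⋖ x.1 ∧ w ⋖ y.1}.ncard : ℚ) := by
  simp only [mul_apply, transpose_apply, upMat, of_apply, boole_mul, ← ite_and]
  refine sum_ite_eq_ncard rk (fun w => w ⋖ x.1 ∧ w ⋖ y.1) fun w hw => ?_
  have := hgrade w x.1 hw.1
  omega

lemma duMat_succ (r : ℕ) (hD1 : ∀ x : α, {z : α | x ⋖ z}.ncard = {y : α | y ⋖ x}.ncard + r)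
    (hD2 : ∀ x y : α, x ≠ y →
      {z : α | z ⋖ x ∧ z ⋖ y}.ncard = {z : α | x ⋖ z ∧ y ⋖ z}.ncard)
    (N : ℕ) : duMat rk (N + 1) = upMat rk N * (upMat rk N)ᵀ + (r : ℚ) • 1 := by
  ext x y
  rw [Matrix.add_apply, duMat_apply rk hgrade, upMat_mul_transpose_apply rk hgrade]
  by_cases hxy : x = y
  · subst hxy
    simp [hD1 x.1]
  · rw [← hD2 x.1 y.1 (fun h => hxy (Subtype.ext h))]
    simp [hxy]

lemma duMat_zero [OrderBot α] (hdown : ∀ x : α, x ≠ ⊥ → ∃ y : α, y ⋖ x) (r : ℕ)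
    (hD1 : ∀ x : α, {z : α | x ⋖ z}.ncard = {y : α | y ⋖ x}.ncard + r) :
    duMat rk 0 = (r : ℚ) • 1 := by
  ext x y
  have hx := eq_bot_of_rk_eq_zero rk hgrade hdown x.2
  have hxy : x = y := Subtype.ext (hx.trans (eq_bot_of_rk_eq_zero rk hgrade hdown y.2).symm)
  subst hxy
  simp only [duMat_apply rk hgrade, hx, and_self, hD1]
  simp

end UpDown

section UpIter

variable [PartialOrder α] (rk : α → ℕ) [∀ n : ℕ, Fintype {x : α // rk x = n}]

lemma upIter_add (m j : ℕ) (v w : {x : α // rk x = m} → ℚ) :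
    upIter rk m j (v + w) = upIter rk m j v + upIter rk m j w := by
  induction j with
  | zero => rfl
  | succ j ih => simp only [upIter, ih, mulVec_add]

lemma upIter_smul (m j : ℕ) (a : ℚ) (v : {x : α // rk x = m} → ℚ) :
    upIter rk m j (a • v) = a • upIter rk m j v := by
  induction j with
  | zero => rfl
  | succ j ih => simp only [upIter, ih, mulVec_smul]

lemma upMat_mulVec_rankCast {a b : ℕ} (h : a = b) (v : {x : α // rk x = a} → ℚ) :
    upMat rk b *ᵥ rankCast rk a b v = rankCast rk (a + 1) (b + 1) (upMat rk a *ᵥ v) := by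
  subst h
  rw [rankCast_self, rankCast_self]

lemma upIter_upMat_mulVec (m : ℕ) (v : {x : α // rk x = m} → ℚ) :
    ∀ j : ℕ, upIter rk (m + 1) j (upMat rk m *ᵥ v)
      = rankCast rk (m + (j + 1)) (m + 1 + j) (upIter rk m (j + 1) v)
  | 0 => (rankCast_self rk _ _).symm
  | j + 1 => by
    rw [upIter, upIter_upMat_mulVec m v j, upMat_mulVec_rankCast rk (by omega)]
    rfl

lemma duMat_mulVec_upIter (hgrade : ∀ x y : α, x ⋖ y → rk y = rk x + 1) (r : ℕ)
    (hD1 : ∀ x : α, {z : α | x ⋖ z}.ncard = {y : α | y ⋖ x}.ncard + r)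
    (hD2 : ∀ x y : α, x ≠ y →
      {z : α | z ⋖ x ∧ z ⋖ y}.ncard = {z : α | x ⋖ z ∧ y ⋖ z}.ncard)
    (m : ℕ) (v : {x : α // rk x = m} → ℚ) :
    ∀ j : ℕ, duMat rk (m + j) *ᵥ upIter rk m j v
      = upIter rk m j (duMat rk m *ᵥ v) + ((j : ℚ) * r) • upIter rk m j v
  | 0 => by simp [upIter]
  | j + 1 => by
    have hDU : (upMat rk (m + j))ᵀ * upMat rk (m + j) = duMat rk (m + j) := rfl
    rw [upIter, upIter]
    change duMat rk (m + j + 1) *ᵥ _ = _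
    rw [duMat_succ rk hgrade r hD1 hD2, add_mulVec, smul_mulVec,
      one_mulVec, mulVec_mulVec, Matrix.mul_assoc, ← mulVec_mulVec, hDU,
      duMat_mulVec_upIter hgrade r hD1 hD2 m v j, mulVec_add, mulVec_smul]
    push_cast
    module

end UpIter

section Chain

variable [PartialOrder α] (rk : α → ℕ) [∀ n : ℕ, Fintype {x : α // rk x = n}]
  (hgrade : ∀ x y : α, x ⋖ y → rk y = rk x + 1) (t : ℕ → α)
include hgrade

lemma setOf_covBy_finite (x : α) : {z : α | z ⋖ x}.Finite :=
  (Set.finite_range (Subtype.val : {z : α // rk z = rk x - 1} → α)).subset fun z hz =>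
    ⟨⟨z, by have := hgrade z x hz; omega⟩, rfl⟩

lemma covBy_chain_succ_iff (htchain : ∀ m : ℕ, t m ⋖ t (m + 1))
    (hcovt : ∀ m : ℕ, {z : α | z ⋖ t m}.ncard ≤ 1) {m : ℕ} {z : α} :
    z ⋖ t (m + 1) ↔ z = t m := by
  refine ⟨fun hz => ?_, fun hz => hz ▸ htchain m⟩
  exact (Set.ncard_le_one (setOf_covBy_finite rk hgrade _)).1 (hcovt (m + 1)) z hz _ (htchain m)

lemma transpose_upMat_mulVec_basisVec_chain (htchain : ∀ m : ℕ, t m ⋖ t (m + 1))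
    (hrkt : ∀ m : ℕ, rk (t m) = m) (hcovt : ∀ m : ℕ, {z : α | z ⋖ t m}.ncard ≤ 1) (m : ℕ) :
    (upMat rk m)ᵀ *ᵥ basisVec rk (m + 1) (t (m + 1)) = basisVec rk m (t m) := by
  funext x
  rw [basisVec_eq_single rk (hrkt (m + 1)), mulVec_single_one]
  simp [upMat, basisVec, covBy_chain_succ_iff rk hgrade t htchain hcovt]

end Chain

section ChainUp

variable [PartialOrder α] (rk : α → ℕ) [∀ n : ℕ, Fintype {x : α // rk x = n}] (t : ℕ → α)

/-- `U^j t_m` as a vector of `ℚP_n`: zero unless `m + j = n`. -/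
noncomputable def chainUp (n m j : ℕ) : {x : α // rk x = n} → ℚ :=
  rankCast rk (m + j) n (upIter rk m j (basisVec rk m (t m)))

-- For `m = 0` the truncated `m - 1` is harmless: the first term on the right vanishes by rank.
lemma duMat_add_smul_mulVec_chainUp [OrderBot α] (r : ℕ)
    (hgrade : ∀ x y : α, x ⋖ y → rk y = rk x + 1)
    (hdown : ∀ x : α, x ≠ ⊥ → ∃ y : α, y ⋖ x)
    (hD1 : ∀ x : α, {z : α | x ⋖ z}.ncard = {y : α | y ⋖ x}.ncard + r)
    (hD2 : ∀ x y : α, x ≠ y →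
      {z : α | z ⋖ x ∧ z ⋖ y}.ncard = {z : α | x ⋖ z ∧ y ⋖ z}.ncard)
    (htchain : ∀ m : ℕ, t m ⋖ t (m + 1)) (hrkt : ∀ m : ℕ, rk (t m) = m)
    (hcovt : ∀ m : ℕ, {z : α | z ⋖ t m}.ncard ≤ 1) (k : ℕ) {m j n : ℕ} (h : m + j = n) :
    (duMat rk n + (k : ℚ) • 1) *ᵥ chainUp rk t n m j
      = chainUp rk t n (m - 1) (j + 1) + (((j : ℚ) + 1) * r + k) • chainUp rk t n m j := by
  subst h
  have hDU : duMat rk (m + j) *ᵥ upIter rk m j (basisVec rk m (t m))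
      = chainUp rk t (m + j) (m - 1) (j + 1)
        + (((j : ℚ) + 1) * r) • upIter rk m j (basisVec rk m (t m)) := by
    rw [duMat_mulVec_upIter rk hgrade r hD1 hD2]
    rcases m with _ | m
    · rw [duMat_zero rk hgrade hdown r hD1, smul_mulVec, one_mulVec, upIter_smul, chainUp,
        rankCast_of_ne rk (by omega), ← add_smul, show (r + j * r : ℚ) = (j + 1) * r by ring]
      exact (zero_add _).symm
    · change _ = chainUp rk t (m + 1 + j) m (j + 1) + _
      rw [duMat_succ rk hgrade r hD1 hD2, add_mulVec, smul_mulVec, one_mulVec, ← mulVec_mulVec,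
        transpose_upMat_mulVec_basisVec_chain rk hgrade t htchain hrkt hcovt, upIter_add,
        upIter_smul, upIter_upMat_mulVec, chainUp]
      module
  have hself : chainUp rk t (m + j) m j = upIter rk m j (basisVec rk m (t m)) :=
    rankCast_self rk _ _
  rw [hself, add_mulVec, smul_mulVec, one_mulVec, hDU]
  module

end ChainUp

lemma genFac_succ (r k j : ℕ) : genFac r k (j + 1) = genFac r k j * (r * (j + 1) + k) :=
  Finset.prod_range_succ _ _

lemma neg_one_pow_div_genFac_succ_mul {k : ℕ} (hk : 0 < k) (r j : ℕ) :
    (-1 : ℚ) ^ j / genFac r k (j + 1) * (((j : ℚ) + 1) * r + k) = (-1) ^ j / genFac r k j := by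
  have hfac : (genFac r k j : ℚ) ≠ 0 := by
    simp only [genFac, Nat.cast_prod, Finset.prod_ne_zero_iff]
    intro i _
    positivity
  have hk' : ((j : ℚ) + 1) * r + k ≠ 0 := by positivity
  rw [genFac_succ]
  push_cast
  field_simp

open Classical in
/-- For an `r`-differential poset, a positive integer `k`, and a saturated chain
`t_0 ⋖ t_1 ⋖ ⋯` with `rank(t_m) = m` in which each `t_m` covers at most one element,
the vector `v_{n,k} = Σ_{j=0}^n (-1)^j U^j t_{n-j} / (j+1)!_{r,k}` satisfies
`(DU_n + kI) v_{n,k} = t_n`. -/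
theorem du_add_k_mulVec_vVec [PartialOrder α] [OrderBot α]
    (rk : α → ℕ) (r : ℕ) [∀ n : ℕ, Fintype {x : α // rk x = n}]
    (hr : 1 ≤ r) (hbot : rk ⊥ = 0)
    (hgrade : ∀ x y : α, x ⋖ y → rk y = rk x + 1)
    (hdown : ∀ x : α, x ≠ ⊥ → ∃ y : α, y ⋖ x)
    (hD1 : ∀ x : α, {z : α | x ⋖ z}.ncard = {y : α | y ⋖ x}.ncard + r)
    (hD2 : ∀ x y : α, x ≠ y →
      {z : α | z ⋖ x ∧ z ⋖ y}.ncard = {z : α | x ⋖ z ∧ y ⋖ z}.ncard)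
    (t : ℕ → α) (htchain : ∀ m : ℕ, t m ⋖ t (m + 1))
    (hrkt : ∀ m : ℕ, rk (t m) = m)
    (hcovt : ∀ m : ℕ, {z : α | z ⋖ t m}.ncard ≤ 1)
    (k : ℕ) (hk : 0 < k) (n : ℕ) :
    (duMat rk n + (k : ℚ) • 1).mulVec (vVec rk t r k n) = basisVec rk n (t n) := by
  set T : ℕ → {x : α // rk x = n} → ℚ := fun j => chainUp rk t n (n - j) j
  set d : ℕ → ℚ := fun j => (-1) ^ j / genFac r k j
  have hterm : ∀ j ∈ Finset.range (n + 1),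
      (duMat rk n + (k : ℚ) • 1) *ᵥ (((-1 : ℚ) ^ j / genFac r k (j + 1)) • T j)
        = d j • T j - d (j + 1) • T (j + 1) := by
    intro j hj
    have hjn : n - j + j = n := Nat.sub_add_cancel (Finset.mem_range_succ_iff.mp hj)
    rw [mulVec_smul, duMat_add_smul_mulVec_chainUp rk t r hgrade hdown hD1 hD2 htchain hrkt hcovt
      k hjn, Nat.sub_sub]
    have hcoef := neg_one_pow_div_genFac_succ_mul hk r j
    simp only [d, T, pow_succ]
    match_scalars
    · ring
    · linear_combination hcoef
  calc (duMat rk n + (k : ℚ) • 1) *ᵥ vVec rk t r k n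
      = ∑ j ∈ Finset.range (n + 1), (d j • T j - d (j + 1) • T (j + 1)) := by
        rw [vVec, mulVec_sum]
        exact Finset.sum_congr rfl hterm
    _ = d 0 • T 0 - d (n + 1) • T (n + 1) := Finset.sum_range_sub' _ _
    _ = basisVec rk n (t n) := by
        simp only [T, chainUp, rankCast_of_ne rk (show n - (n + 1) + (n + 1) ≠ n by omega)]
        simp [d, genFac, upIter, rankCast_self]
end

section
/- Let P be an r-differential poset with r ≥ 2, k and n positive integers, and let t_0 ⋖ t_1 ⋖ ⋯ and s_0 ⋖ s_1 ⋖ ⋯ be saturated chains as guaranteed for r ≥ 2 (rank(t_m) = rank(s_m) = m, each covering at most one element, t_0 = s_0, t_m ≠ s_m for m ≥ 1). Then (n+1)!_{r,k} is the smallest positive integer s such that s · v_{n,k} ∈ ℤP_n, where v_{n,k} := Σ_{j=0}^{n} (−1)^j U^j t_{n−j} / (j+1)!_{r,k} ∈ ℚP_n. -/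
open Matrix

variable {α : Type*}

/-! Every element of the chain `s` covers only its predecessor, so the segment of `s` is the only
saturated chain from rank `m` up to `s (m + j)`: the `s (m + j)`-coordinate of `U^j y` is `1` if
`y = s m` and `0` otherwise. As `t m = s m` only for `m = 0`, the `s n`-coordinate of `v_{n,k}` is
`(-1)^n / (n+1)!_{r,k}`, which forces the denominator. Conversely `U` has integer entries and every
`(j+1)!_{r,k}` divides `(n+1)!_{r,k}`. -/
lemma genFac_pos {r k : ℕ} (hk : 0 < k) (ℓ : ℕ) : 0 < genFac r k ℓ :=
  Finset.prod_pos fun _ _ => by omega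

lemma genFac_dvd_genFac (r k : ℕ) {a b : ℕ} (h : a ≤ b) : genFac r k a ∣ genFac r k b :=
  Finset.prod_dvd_prod_of_subset _ _ _ (Finset.range_subset_range.mpr h)

lemma dvd_of_mul_neg_one_pow_div_eq_intCast {c N n : ℕ} {m : ℤ} (hN : N ≠ 0)
    (h : (c : ℚ) * ((-1) ^ n / N) = m) : N ∣ c := by
  have hcq : (c : ℚ) = m * (-1) ^ n * N := by
    rw [← h]
    field_simp
    rw [← pow_mul, pow_mul', neg_one_sq, one_pow, mul_one]
  have hcz : (c : ℤ) = m * (-1) ^ n * N := by exact_mod_cast hcq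
  exact Int.natCast_dvd_natCast.mp (Dvd.intro_left _ hcz.symm)

section UpMap

variable [PartialOrder α] (rk : α → ℕ)

lemma basisVec_mem_bot (m : ℕ) (y : α) (x : {x : α // rk x = m}) :
    basisVec rk m y x ∈ (⊥ : Subring ℚ) := by
  classical
  rw [basisVec]
  split_ifs
  exacts [Subring.one_mem _, Subring.zero_mem _]

lemma rankCast_mem_bot (m n : ℕ) {v : {x : α // rk x = m} → ℚ}
    (hv : ∀ x, v x ∈ (⊥ : Subring ℚ)) (x : {x : α // rk x = n}) :
    rankCast rk m n v x ∈ (⊥ : Subring ℚ) := by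
  rw [rankCast]
  split_ifs
  exacts [hv _, Subring.zero_mem _]

variable [∀ n : ℕ, Fintype {x : α // rk x = n}]

lemma upIter_mem_bot (m j : ℕ) {v : {x : α // rk x = m} → ℚ}
    (hv : ∀ x, v x ∈ (⊥ : Subring ℚ)) (x : {x : α // rk x = m + j}) :
    upIter rk m j v x ∈ (⊥ : Subring ℚ) := by
  classical
  induction j with
  | zero => exact hv x
  | succ j ih =>
    refine Subring.sum_mem _ fun y _ => Subring.mul_mem _ (?_ : upMat rk (m + j) x y ∈ _) (ih y)
    rw [upMat, Matrix.of_apply]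
    split_ifs
    exacts [Subring.one_mem _, Subring.zero_mem _]

lemma genFac_mul_vVec_mem_bot (t : ℕ → α) {r k : ℕ} (hk : 0 < k) (n : ℕ)
    (x : {x : α // rk x = n}) :
    (genFac r k (n + 1) : ℚ) * vVec rk t r k n x ∈ (⊥ : Subring ℚ) := by
  rw [vVec, Finset.sum_apply, Finset.mul_sum]
  refine Subring.sum_mem _ fun j hj => ?_
  have hjn : j + 1 ≤ n + 1 := by simpa using hj
  have hquot : (genFac r k (n + 1) : ℚ) / genFac r k (j + 1) =
      ((genFac r k (n + 1) / genFac r k (j + 1) : ℕ) : ℚ) :=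
    (Nat.cast_div (genFac_dvd_genFac r k hjn) (by exact_mod_cast (genFac_pos hk _).ne')).symm
  rw [Pi.smul_apply, smul_eq_mul, ← mul_assoc, mul_div_left_comm, hquot]
  refine Subring.mul_mem _ (Subring.mul_mem _ (Subring.pow_mem _ (Subring.neg_mem _
    (Subring.one_mem _)) _) (natCast_mem _ _)) ?_
  exact rankCast_mem_bot rk _ _ (upIter_mem_bot rk _ _ (basisVec_mem_bot rk _ _)) x

end UpMap

section Chain

variable [PartialOrder α] (rk : α → ℕ) [∀ n : ℕ, Fintype {x : α // rk x = n}]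

lemma eq_of_covBy_of_ncard_le_one (hgrade : ∀ x y : α, x ⋖ y → rk y = rk x + 1)
    {w z z' : α} (hw : {y : α | y ⋖ w}.ncard ≤ 1) (hz : z ⋖ w) (hz' : z' ⋖ w) :
    z = z' := by
  -- `ncard` is `0` on infinite sets, so `hw` says something only once the covers are finite.
  have hrank : {x : α | rk x = rk w - 1}.Finite :=
    Set.finite_coe_iff.mp (inferInstanceAs (Finite {x : α // rk x = rk w - 1}))
  have hfin : {y : α | y ⋖ w}.Finite := hrank.subset fun y (hy : y ⋖ w) => by
    have := hgrade y w hy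
    show rk y = rk w - 1
    omega
  exact (Set.ncard_le_one_iff hfin).mp hw hz hz'

open Classical in
lemma upIter_basisVec_apply_chain (hgrade : ∀ x y : α, x ⋖ y → rk y = rk x + 1)
    {s : ℕ → α} (hschain : ∀ m : ℕ, s m ⋖ s (m + 1))
    (hrks : ∀ m : ℕ, rk (s m) = m) (hcovs : ∀ m : ℕ, {z : α | z ⋖ s m}.ncard ≤ 1)
    (m : ℕ) (y : α) (j : ℕ) (x : {x : α // rk x = m + j}) (hx : x.1 = s (m + j)) :
    upIter rk m j (basisVec rk m y) x = if y = s m then 1 else 0 := by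
  induction j with
  | zero => simp [upIter, basisVec, hx, eq_comm]
  | succ j ih =>
    have hprev : s (m + j) ⋖ x.1 := hx ▸ hschain _
    calc upIter rk m (j + 1) (basisVec rk m y) x
        = upMat rk (m + j) x ⟨s (m + j), hrks _⟩ *
            upIter rk m j (basisVec rk m y) ⟨s (m + j), hrks _⟩ := by
          refine Fintype.sum_eq_single _ fun z hz => ?_
          have hnot : ¬ z.1 ⋖ x.1 := fun hzx => hz (Subtype.ext
            (eq_of_covBy_of_ncard_le_one rk hgrade (hx ▸ hcovs _) hzx hprev))
          simp [upMat, hnot]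
      _ = if y = s m then 1 else 0 := by
          rw [ih _ rfl]
          simp [upMat, hprev]

lemma vVec_apply_chain (hgrade : ∀ x y : α, x ⋖ y → rk y = rk x + 1) {t s : ℕ → α}
    (hschain : ∀ m : ℕ, s m ⋖ s (m + 1)) (hrks : ∀ m : ℕ, rk (s m) = m)
    (hcovs : ∀ m : ℕ, {z : α | z ⋖ s m}.ncard ≤ 1)
    (h0 : t 0 = s 0) (hne : ∀ m : ℕ, 1 ≤ m → t m ≠ s m) (r k n : ℕ) :
    vVec rk t r k n ⟨s n, hrks n⟩ = (-1) ^ n / genFac r k (n + 1) := by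
  classical
  have hterm : ∀ j ≤ n, rankCast rk (n - j + j) n
      (upIter rk (n - j) j (basisVec rk (n - j) (t (n - j)))) ⟨s n, hrks n⟩ =
        if j = n then 1 else 0 := by
    intro j hj
    have hsn : s n = s (n - j + j) := by rw [Nat.sub_add_cancel hj]
    rw [rankCast, dif_pos (by rw [hrks]; omega),
      upIter_basisVec_apply_chain rk hgrade hschain hrks hcovs _ _ _ _ hsn]
    rcases Nat.eq_zero_or_pos (n - j) with hj0 | hjpos
    · simp [h0, show j = n by omega]
    · simp [hne _ hjpos, show j ≠ n by omega]
  rw [vVec, Finset.sum_apply, Finset.sum_eq_single_of_mem n (by simp)]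
  · rw [Pi.smul_apply, smul_eq_mul, hterm n le_rfl, if_pos rfl, mul_one]
  · intro j hj hjn
    rw [Pi.smul_apply, smul_eq_mul, hterm j (Nat.lt_succ_iff.mp (Finset.mem_range.mp hj)),
      if_neg hjn, mul_zero]

end Chain

/-- For `r ≥ 2`, `(n+1)!_{r,k}` is the smallest positive integer `s` such that
`s · v_{n,k}` has integer coordinates. -/
theorem genFac_isLeast_denominator [PartialOrder α] [OrderBot α]
    (rk : α → ℕ) (r : ℕ) [∀ n : ℕ, Fintype {x : α // rk x = n}]
    (hr : 2 ≤ r) (hbot : rk ⊥ = 0)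
    (hgrade : ∀ x y : α, x ⋖ y → rk y = rk x + 1)
    (hdown : ∀ x : α, x ≠ ⊥ → ∃ y : α, y ⋖ x)
    (hD1 : ∀ x : α, {z : α | x ⋖ z}.ncard = {y : α | y ⋖ x}.ncard + r)
    (hD2 : ∀ x y : α, x ≠ y →
      {z : α | z ⋖ x ∧ z ⋖ y}.ncard = {z : α | x ⋖ z ∧ y ⋖ z}.ncard)
    (t : ℕ → α) (htchain : ∀ m : ℕ, t m ⋖ t (m + 1))
    (hrkt : ∀ m : ℕ, rk (t m) = m)
    (hcovt : ∀ m : ℕ, {z : α | z ⋖ t m}.ncard ≤ 1)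
    (s : ℕ → α) (hschain : ∀ m : ℕ, s m ⋖ s (m + 1))
    (hrks : ∀ m : ℕ, rk (s m) = m)
    (hcovs : ∀ m : ℕ, {z : α | z ⋖ s m}.ncard ≤ 1)
    (h0 : t 0 = s 0) (hne : ∀ m : ℕ, 1 ≤ m → t m ≠ s m)
    (k n : ℕ) (hk : 0 < k) (hn : 0 < n) :
    IsLeast {c : ℕ | 0 < c ∧ ∀ x : {x : α // rk x = n},
        ∃ m : ℤ, (c : ℚ) * vVec rk t r k n x = (m : ℚ)}
      (genFac r k (n + 1)) := by
  refine ⟨⟨genFac_pos hk _, fun x => ?_⟩, fun c ⟨hc, hcint⟩ => ?_⟩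
  · obtain ⟨m, hm⟩ := Subring.mem_bot.mp (genFac_mul_vVec_mem_bot rk t hk n x)
    exact ⟨m, hm.symm⟩
  · obtain ⟨m, hm⟩ := hcint ⟨s n, hrks n⟩
    rw [vVec_apply_chain rk hgrade hschain hrks hcovs h0 hne] at hm
    exact Nat.le_of_dvd hc (dvd_of_mul_neg_one_pow_div_eq_intCast (genFac_pos hk _).ne' hm)
end
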